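/- arXiv:1102.1984 — 4 statements merged into one kernel-verified Lean document; each statement's English description precedes it below -/
import Mathlib

section
/- Let n ≥ 1. A stable n-set α ⊆ ZMod (2n+2) is tight if and only if all elements of α have the same parity; equivalently, the tight stable n-sets with all elements odd are precisely the n-element subsets of the set of n + 1 odd elements of ZMod (2n+2), and likewise for even. -/
/-!
Common definitions: stable n-sets in `ZMod (2*n+2)`, tight/loose sets, shifts,
outer neighbors, parity, the sets `P_i`, and adjacency in the stable Kneser
graph `SG_{n,2}` (two stable n-sets are adjacent iff they are disjoint).
-/

instance (n : ℕ) : NeZero (2 * n + 2) := ⟨by omega⟩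

/-- A stable n-set: a finite subset of `ZMod (2n+2)` of cardinality `n`
containing no two (cyclically) consecutive elements. -/
def IsStable (n : ℕ) (α : Finset (ZMod (2 * n + 2))) : Prop :=
  α.card = n ∧ ∀ i : ZMod (2 * n + 2), ¬(i ∈ α ∧ i + 1 ∈ α)

/-- A set is tight if it has the form `{i, i+2, i+4, …, i+2(n-1)}`. -/
def IsTight (n : ℕ) (α : Finset (ZMod (2 * n + 2))) : Prop :=
  ∃ i : ZMod (2 * n + 2), α = (Finset.range n).image (fun k : ℕ => i + 2 * (k : ZMod (2 * n + 2)))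

/-- `α ⊕ j`, the shift of `α` by `j`. -/
def oplus (n : ℕ) (α : Finset (ZMod (2 * n + 2))) (j : ZMod (2 * n + 2)) :
    Finset (ZMod (2 * n + 2)) :=
  α.image (fun a => a + j)

/-- `α ⊖ j`, the shift of `α` by `-j`. -/
def ominus (n : ℕ) (α : Finset (ZMod (2 * n + 2))) (j : ZMod (2 * n + 2)) :
    Finset (ZMod (2 * n + 2)) :=
  α.image (fun a => a - j)

/-- `β` is an outer neighbor of `α`: they are disjoint and
`β = ((α \ {a}) ⊕ 1) ∪ {a + 2}` for some `a ∈ α`. -/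
def OuterNbr (n : ℕ) (α β : Finset (ZMod (2 * n + 2))) : Prop :=
  Disjoint α β ∧ ∃ a ∈ α, β = oplus n (α.erase a) 1 ∪ {a + 2}

/-- The parity of an element of `ZMod (2n+2)`: its image in `ZMod 2` under the
natural ring homomorphism. -/
def parity (n : ℕ) (a : ZMod (2 * n + 2)) : ZMod 2 :=
  ZMod.castHom (show (2 : ℕ) ∣ 2 * n + 2 from ⟨n + 1, by ring⟩) (ZMod 2) a

/-- Adjacency in the stable Kneser graph `SG_{n,2}`: two distinct stable n-sets
are adjacent iff they are disjoint. -/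
def SGAdj (n : ℕ) (α β : Finset (ZMod (2 * n + 2))) : Prop :=
  IsStable n α ∧ IsStable n β ∧ α ≠ β ∧ Disjoint α β

/-- `P_i`: stable n-sets with exactly `i` even elements and `n - i` odd elements. -/
def Pset (n i : ℕ) : Set (Finset (ZMod (2 * n + 2))) :=
  {α | IsStable n α ∧ (α.filter fun a => parity n a = 0).card = i ∧
       (α.filter fun a => parity n a = 1).card = n - i}

/-!
The elements of a fixed parity form the orbit `{i, i + 2, …, i + 2n}` of any one of them,
a cycle of `n + 1` elements. A tight set `{i, i + 2, …, i + 2(n-1)}` is this orbit with the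
single element `i - 2 = i + 2n` removed, so the tight sets are exactly the `n`-subsets of a
parity class; such subsets are automatically stable since `a` and `a + 1` differ in parity.
-/

variable {n : ℕ}

lemma parity_add_two_mul (a b : ZMod (2 * n + 2)) : parity n (a + 2 * b) = parity n a := by
  simp only [parity, map_add, map_mul, map_ofNat]
  rw [show (2 : ZMod 2) = 0 from rfl, zero_mul, add_zero]

lemma exists_eq_two_mul_of_parity_eq_zero {x : ZMod (2 * n + 2)} (hx : parity n x = 0) :
    ∃ k < n + 1, x = 2 * (k : ZMod (2 * n + 2)) := by
  rw [parity, ZMod.castHom_apply, ZMod.cast_eq_val, ZMod.natCast_eq_zero_iff] at hx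
  obtain ⟨k, hk⟩ := hx
  refine ⟨k, ?_, ?_⟩
  · have := ZMod.val_lt x
    omega
  · rw [← ZMod.natCast_zmod_val x, hk]
    push_cast
    rfl

lemma injOn_add_two_mul (i : ZMod (2 * n + 2)) :
    Set.InjOn (fun k : ℕ => i + 2 * (k : ZMod (2 * n + 2))) (Finset.range (n + 1)) := by
  intro k hk l hl hkl
  simp only [Finset.coe_range, Set.mem_Iio, add_right_inj] at hk hl hkl
  have h := (ZMod.natCast_eq_natCast_iff' (2 * k) (2 * l) (2 * n + 2)).mp (by push_cast; exact hkl)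
  rw [Nat.mod_eq_of_lt (by omega), Nat.mod_eq_of_lt (by omega)] at h
  omega

lemma image_range_succ_add_two_mul (i : ZMod (2 * n + 2)) :
    (Finset.range (n + 1)).image (fun k : ℕ => i + 2 * (k : ZMod (2 * n + 2))) =
      Finset.univ.filter fun a => parity n a = parity n i := by
  ext a
  simp only [Finset.mem_image, Finset.mem_range, Finset.mem_filter, Finset.mem_univ, true_and]
  constructor
  · rintro ⟨k, -, rfl⟩
    exact parity_add_two_mul i k
  · intro ha
    have hdiff : parity n (a - i) = 0 := by
      rw [parity, map_sub, ← parity, ← parity, ha, sub_self]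
    obtain ⟨k, hk, hak⟩ := exists_eq_two_mul_of_parity_eq_zero hdiff
    exact ⟨k, hk, by rw [← hak, add_sub_cancel]⟩

lemma card_filter_parity_eq (p : ZMod 2) :
    (Finset.univ.filter fun a : ZMod (2 * n + 2) => parity n a = p).card = n + 1 := by
  have hp : parity n (p.val : ZMod (2 * n + 2)) = p := by simp [parity]
  rw [← hp, ← image_range_succ_add_two_mul, Finset.card_image_of_injOn (injOn_add_two_mul _),
    Finset.card_range]

lemma image_range_add_two_mul (i : ZMod (2 * n + 2)) :
    (Finset.range n).image (fun k : ℕ => i + 2 * (k : ZMod (2 * n + 2))) =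
      (Finset.univ.filter fun a => parity n a = parity n i).erase (i - 2) := by
  have hlast : i - 2 = i + 2 * (n : ZMod (2 * n + 2)) := by
    have h := ZMod.natCast_self (2 * n + 2)
    push_cast at h
    linear_combination -h
  rw [← image_range_succ_add_two_mul, Finset.range_add_one, Finset.image_insert, hlast,
    Finset.erase_insert]
  intro hmem
  obtain ⟨k, hk, hkn⟩ := Finset.mem_image.mp hmem
  rw [Finset.mem_range] at hk
  have := injOn_add_two_mul i (by simp only [Finset.coe_range, Set.mem_Iio]; omega)
    (by simp) hkn
  omega

lemma IsTight.exists_parity_eq {α : Finset (ZMod (2 * n + 2))} (hα : IsTight n α) :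
    ∃ p : ZMod 2, ∀ a ∈ α, parity n a = p := by
  obtain ⟨i, rfl⟩ := hα
  refine ⟨parity n i, fun a ha => ?_⟩
  obtain ⟨k, -, rfl⟩ := Finset.mem_image.mp ha
  exact parity_add_two_mul i k

lemma isTight_of_parity_eq {α : Finset (ZMod (2 * n + 2))} {p : ZMod 2} (hcard : α.card = n)
    (hp : ∀ a ∈ α, parity n a = p) : IsTight n α := by
  set S := Finset.univ.filter fun a : ZMod (2 * n + 2) => parity n a = p
  have hsub : α ⊆ S := fun a ha => by simpa [S] using hp a ha
  have hS : S.card = n + 1 := card_filter_parity_eq p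
  obtain ⟨m, hmS, hmα⟩ := Finset.exists_of_ssubset
    (Finset.ssubset_iff_subset_ne.mpr ⟨hsub, by rintro rfl; omega⟩)
  have hαS : α = S.erase m := Finset.eq_of_subset_of_card_le
    (fun a ha => Finset.mem_erase.mpr ⟨by rintro rfl; exact hmα ha, hsub ha⟩)
    (by rw [Finset.card_erase_of_mem hmS]; omega)
  have hm : parity n (m + 2) = p := by
    simpa using (parity_add_two_mul m 1).trans (Finset.mem_filter.mp hmS).2
  refine ⟨m + 2, ?_⟩
  rw [image_range_add_two_mul, hm, add_sub_cancel_right, hαS]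

lemma isStable_of_parity_eq {α : Finset (ZMod (2 * n + 2))} {p : ZMod 2} (hcard : α.card = n)
    (hp : ∀ a ∈ α, parity n a = p) : IsStable n α := by
  refine ⟨hcard, fun i ⟨hi, hi₁⟩ => ?_⟩
  have h := hp (i + 1) hi₁
  rw [parity, map_add, map_one, ← parity, hp i hi] at h
  exact one_ne_zero (add_eq_left.mp h)

lemma isStable_and_isTight_and_parity_eq_iff (α : Finset (ZMod (2 * n + 2))) (p : ZMod 2) :
    (IsStable n α ∧ IsTight n α ∧ ∀ a ∈ α, parity n a = p) ↔
      (α.card = n ∧ α ⊆ Finset.univ.filter fun a => parity n a = p) := by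
  simp only [Finset.subset_iff, Finset.mem_filter, Finset.mem_univ, true_and]
  constructor
  · rintro ⟨hst, -, hp⟩
    exact ⟨hst.1, hp⟩
  · rintro ⟨hcard, hp⟩
    exact ⟨isStable_of_parity_eq hcard hp, isTight_of_parity_eq hcard hp, hp⟩

theorem tight_iff_same_parity_general (n : ℕ) :
    (∀ α : Finset (ZMod (2 * n + 2)), IsStable n α →
      (IsTight n α ↔ ∃ p : ZMod 2, ∀ a ∈ α, parity n a = p)) ∧
    (Finset.univ.filter fun a : ZMod (2 * n + 2) => parity n a = 1).card = n + 1 ∧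
    (Finset.univ.filter fun a : ZMod (2 * n + 2) => parity n a = 0).card = n + 1 ∧
    (∀ α : Finset (ZMod (2 * n + 2)),
      (IsStable n α ∧ IsTight n α ∧ ∀ a ∈ α, parity n a = 1) ↔
      (α.card = n ∧ α ⊆ Finset.univ.filter fun a => parity n a = 1)) ∧
    (∀ α : Finset (ZMod (2 * n + 2)),
      (IsStable n α ∧ IsTight n α ∧ ∀ a ∈ α, parity n a = 0) ↔
      (α.card = n ∧ α ⊆ Finset.univ.filter fun a => parity n a = 0)) :=
  ⟨fun _ hα => ⟨IsTight.exists_parity_eq, fun ⟨_, hp⟩ => isTight_of_parity_eq hα.1 hp⟩,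
    card_filter_parity_eq 1, card_filter_parity_eq 0,
    fun α => isStable_and_isTight_and_parity_eq_iff α 1,
    fun α => isStable_and_isTight_and_parity_eq_iff α 0⟩

/-- A stable n-set is tight iff all its elements have the same parity;
equivalently, the all-odd (resp. all-even) tight stable n-sets are exactly the
n-element subsets of the set of `n + 1` odd (resp. even) elements. -/
theorem tight_iff_same_parity (n : ℕ) (hn : 1 ≤ n) :
    (∀ α : Finset (ZMod (2 * n + 2)), IsStable n α →
      (IsTight n α ↔ ∃ p : ZMod 2, ∀ a ∈ α, parity n a = p)) ∧
    (Finset.univ.filter fun a : ZMod (2 * n + 2) => parity n a = 1).card = n + 1 ∧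
    (Finset.univ.filter fun a : ZMod (2 * n + 2) => parity n a = 0).card = n + 1 ∧
    (∀ α : Finset (ZMod (2 * n + 2)),
      (IsStable n α ∧ IsTight n α ∧ ∀ a ∈ α, parity n a = 1) ↔
      (α.card = n ∧ α ⊆ Finset.univ.filter fun a => parity n a = 1)) ∧
    (∀ α : Finset (ZMod (2 * n + 2)),
      (IsStable n α ∧ IsTight n α ∧ ∀ a ∈ α, parity n a = 0) ↔
      (α.card = n ∧ α ⊆ Finset.univ.filter fun a => parity n a = 0)) :=
  tight_iff_same_parity_general n
end

section
/- Let n ≥ 1. The number of stable n-sets of ZMod (2n+2), i.e. the number of vertices of the stable Kneser graph SG_{n,2}, is exactly (n+1)². -/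
/-!
Since a stable `n`-set `α` has more non-elements (`n + 2`) than elements, some `m` has
`m, m - 1 ∉ α`. Cutting the cycle at such a gap `m` leaves the window `m + 1, …, m + 2n`, and `n`
pairwise non-consecutive points of a path on `2n` vertices are forced to be the odd offsets
`1, 3, …, 2s - 1` followed by the even offsets `2s + 2, …, 2n`. Such a set has exactly the two gaps
`m` and `m + 2s + 1`, of opposite parity; normalising to the even one parametrises the stable
`n`-sets bijectively by an even point and some `s ≤ n`.
-/

open Finset

lemma injOn_succ_div_two_of_succ_notMem {O : Finset ℕ} (hsep : ∀ t ∈ O, t + 1 ∉ O) :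
    Set.InjOn (fun t => (t + 1) / 2) O := by
  intro t ht u hu htu
  by_contra hne
  obtain rfl | rfl : u = t + 1 ∨ t = u + 1 := by simp only at htu; omega
  exacts [hsep t ht hu, hsep u hu ht]

lemma card_le_of_subset_Icc_of_succ_notMem {n : ℕ} {O : Finset ℕ} (hO : O ⊆ Icc 1 (2 * n))
    (hsep : ∀ t ∈ O, t + 1 ∉ O) : #O ≤ n :=
  calc #O ≤ #(Icc 1 n) :=
        card_le_card_of_injOn _ (fun t ht => by
          have := mem_Icc.mp (hO ht); simp only [coe_Icc, Set.mem_Icc]; omega)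
          (injOn_succ_div_two_of_succ_notMem hsep)
    _ = n := Nat.card_Icc 1 n

/-- `stdWindow n s = {1, 3, …, 2s - 1} ∪ {2s + 2, 2s + 4, …, 2n}`. -/
def stdWindow (n s : ℕ) : Finset ℕ :=
  (Icc 1 (2 * n)).filter fun t => (t % 2 = 1 ↔ t ≤ 2 * s)

lemma mem_stdWindow {n s t : ℕ} :
    t ∈ stdWindow n s ↔ 1 ≤ t ∧ t ≤ 2 * n ∧ (t % 2 = 1 ↔ t ≤ 2 * s) := by
  simp [stdWindow, and_assoc]

lemma succ_notMem_stdWindow {n s t : ℕ} (ht : t ∈ stdWindow n s) : t + 1 ∉ stdWindow n s := by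
  rw [mem_stdWindow] at *; omega

lemma card_stdWindow (n s : ℕ) : #(stdWindow n s) = n := by
  refine (card_nbij (fun t => (t + 1) / 2) (t := Icc 1 n) (fun t ht => ?_)
    (injOn_succ_div_two_of_succ_notMem fun _ => succ_notMem_stdWindow) fun k hk => ?_).trans
    (Nat.card_Icc 1 n)
  · rw [mem_coe, mem_stdWindow] at ht; simp only [coe_Icc, Set.mem_Icc]; omega
  · rw [coe_Icc, Set.mem_Icc] at hk
    refine ⟨if k ≤ s then 2 * k - 1 else 2 * k, ?_, ?_⟩ <;>
      split_ifs <;> simp only [mem_coe, mem_stdWindow] <;> omega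

lemma eq_stdWindow_of_card_eq {n : ℕ} {O : Finset ℕ} (hO : O ⊆ Icc 1 (2 * n))
    (hsep : ∀ t ∈ O, t + 1 ∉ O) (hcard : #O = n) : ∃ s ≤ n, O = stdWindow n s := by
  induction n generalizing O with
  | zero => exact ⟨0, le_rfl, by simpa [stdWindow] using hO⟩
  | succ n ih =>
    have hO' : ∀ t ∈ O, 1 ≤ t ∧ t ≤ 2 * n + 2 := fun t ht => by simpa [mul_add] using hO ht
    set low := O.filter (· ≤ 2 * n)
    set high := O.filter (¬ · ≤ 2 * n)
    have hlow_sub : low ⊆ Icc 1 (2 * n) := fun t ht => by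
      rw [mem_filter] at ht; have := hO' t ht.1; simp only [mem_Icc]; omega
    have hlow_sep : ∀ t ∈ low, t + 1 ∉ low :=
      fun t ht ht' => hsep t (mem_filter.mp ht).1 (mem_filter.mp ht').1
    -- `low` has at most `n` elements, so exactly one of `2n + 1`, `2n + 2` lies in `O`.
    have hlow_le : #low ≤ n := card_le_of_subset_Icc_of_succ_notMem hlow_sub hlow_sep
    have hhigh_le : #high ≤ 1 := card_le_one.mpr fun a ha b hb => by
      rw [mem_filter] at ha hb
      have := hO' a ha.1; have := hO' b hb.1
      exact injOn_succ_div_two_of_succ_notMem hsep ha.1 hb.1 (by simp only; omega)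
    have hsplit : #low + #high = #O := card_filter_add_card_filter_not _
    obtain ⟨u, hu⟩ := card_eq_one.mp (show #high = 1 by omega)
    obtain ⟨s, hs, hlow⟩ := ih hlow_sub hlow_sep (by omega)
    have hmem : ∀ t, t ∈ O ↔ t ∈ stdWindow n s ∨ t = u := by
      intro t; rw [← hlow, ← mem_singleton, ← hu, mem_filter, mem_filter]; tauto
    have huO : u ∈ O := (hmem u).mpr (Or.inr rfl)
    have hu_range : u = 2 * n + 1 ∨ u = 2 * n + 2 := by
      have := hO' u huO
      have : ¬ u ≤ 2 * n := (mem_filter.mp (show u ∈ high by simp [hu])).2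
      omega
    rcases hu_range with rfl | rfl
    · have h2n : 2 * n ∉ stdWindow n s := fun h => hsep _ ((hmem _).mpr (Or.inl h)) huO
      rw [mem_stdWindow] at h2n
      refine ⟨n + 1, le_rfl, ext fun t => ?_⟩
      rw [hmem, mem_stdWindow, mem_stdWindow]
      omega
    · refine ⟨s, by omega, ext fun t => ?_⟩
      rw [hmem, mem_stdWindow, mem_stdWindow]
      omega

def IsGap {G : Type*} [Sub G] [One G] (α : Finset G) (m : G) : Prop :=
  m ∉ α ∧ m - 1 ∉ α

lemma exists_isGap {G : Type*} [AddGroupWithOne G] [Fintype G] [DecidableEq G] (α : Finset G)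
    (hα : 2 * #α < Fintype.card G) : ∃ m, IsGap α m := by
  by_contra! h
  have : #αᶜ ≤ #α := card_le_card_of_injOn (· - 1)
    (fun m hm => not_not.mp fun h' => h m ⟨mem_compl.mp hm, h'⟩) sub_left_injective.injOn
  rw [card_compl] at this
  omega

lemma ZMod.val_sub_eq_iff {N : ℕ} [NeZero N] {p x : ZMod N} {t : ℕ} (ht : t < N) :
    (x - p).val = t ↔ x = p + t := by
  constructor
  · rintro rfl; rw [ZMod.natCast_zmod_val]; ring
  · rintro rfl; rw [add_sub_cancel_left, ZMod.val_cast_of_lt ht]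

section

variable {n : ℕ}

lemma natCast_two_mul_add_one_eq_neg_one : ((2 * n + 1 : ℕ) : ZMod (2 * n + 2)) = -1 := by
  rw [eq_neg_iff_add_eq_zero, ← Nat.cast_add_one, ZMod.natCast_self]

def stdSet (n : ℕ) (p : ZMod (2 * n + 2)) (s : ℕ) : Finset (ZMod (2 * n + 2)) :=
  (stdWindow n s).image fun t : ℕ => p + t

lemma mem_stdSet {p x : ZMod (2 * n + 2)} {s : ℕ} :
    x ∈ stdSet n p s ↔ (x - p).val ∈ stdWindow n s := by
  constructor
  · rintro h
    obtain ⟨t, ht, rfl⟩ := mem_image.mp h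
    rwa [(ZMod.val_sub_eq_iff (by rw [mem_stdWindow] at ht; omega)).mpr rfl]
  · intro h
    exact mem_image.mpr ⟨_, h, ((ZMod.val_sub_eq_iff (ZMod.val_lt _)).mp rfl).symm⟩

lemma card_stdSet (p : ZMod (2 * n + 2)) (s : ℕ) : #(stdSet n p s) = n := by
  rw [stdSet, card_image_of_injOn, card_stdWindow]
  intro t ht u hu htu
  rw [mem_coe, mem_stdWindow] at ht hu
  rw [← (ZMod.val_sub_eq_iff (by omega)).mpr htu.symm, add_sub_cancel_left,
    ZMod.val_cast_of_lt (by omega)]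

lemma add_one_notMem_stdSet {p x : ZMod (2 * n + 2)} {s : ℕ} (hx : x ∈ stdSet n p s) :
    x + 1 ∉ stdSet n p s := by
  rw [mem_stdSet] at *
  have hx' := mem_stdWindow.mp hx
  rw [(ZMod.val_sub_eq_iff (t := (x - p).val + 1) (by omega)).mpr
    (by rw [Nat.cast_add_one, ZMod.natCast_zmod_val]; ring)]
  exact succ_notMem_stdWindow hx

lemma isStable_stdSet (p : ZMod (2 * n + 2)) (s : ℕ) : IsStable n (stdSet n p s) :=
  ⟨card_stdSet p s, fun _ ⟨hx, hx1⟩ => add_one_notMem_stdSet hx hx1⟩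

lemma isGap_stdSet_iff {p x : ZMod (2 * n + 2)} {s : ℕ} (hs : s ≤ n) :
    IsGap (stdSet n p s) x ↔ x = p ∨ x = p + (2 * s + 1 : ℕ) := by
  have hlt := ZMod.val_lt (x - p)
  have hx : x = p + ((x - p).val : ℕ) := (ZMod.val_sub_eq_iff hlt).mp rfl
  rw [IsGap, mem_stdSet, mem_stdSet, ← ZMod.val_sub_eq_iff (by omega : 2 * s + 1 < 2 * n + 2)]
  rcases Nat.eq_zero_or_pos (x - p).val with h0 | hpos
  · have hxp : x = p := by rw [hx, h0, Nat.cast_zero, add_zero]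
    have h1 : (x - 1 - p).val = 2 * n + 1 := (ZMod.val_sub_eq_iff (by omega)).mpr
      (by rw [natCast_two_mul_add_one_eq_neg_one, hxp]; ring)
    rw [h0, h1, mem_stdWindow, mem_stdWindow]
    simp only [hxp, true_or, iff_true]
    omega
  · have hxp : x ≠ p := by rintro rfl; simp at hpos
    have h1 : (x - 1 - p).val = (x - p).val - 1 := (ZMod.val_sub_eq_iff (by omega)).mpr
      (by rw [Nat.cast_pred hpos, ZMod.natCast_zmod_val]; ring)
    rw [h1, mem_stdWindow, mem_stdWindow]
    simp only [hxp, false_or]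
    omega

lemma exists_eq_stdSet_of_isGap {α : Finset (ZMod (2 * n + 2))} (hα : IsStable n α)
    {m : ZMod (2 * n + 2)} (hm : IsGap α m) : ∃ s ≤ n, α = stdSet n m s := by
  let offset : ZMod (2 * n + 2) → ℕ := fun x => (x - m).val
  have hf : Function.Injective offset := (ZMod.val_injective _).comp sub_left_injective
  have hsub : α.image offset ⊆ Icc 1 (2 * n) := by
    intro t ht
    obtain ⟨a, ha, rfl⟩ := mem_image.mp ht
    have h0 : offset a ≠ 0 := fun h =>
      hm.1 (by rwa [(ZMod.val_sub_eq_iff (by omega)).mp h, Nat.cast_zero, add_zero] at ha)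
    have h1 : offset a ≠ 2 * n + 1 := fun h =>
      hm.2 (by rwa [(ZMod.val_sub_eq_iff (by omega)).mp h, natCast_two_mul_add_one_eq_neg_one,
        ← sub_eq_add_neg] at ha)
    have : offset a < 2 * n + 2 := ZMod.val_lt _
    rw [mem_Icc]; omega
  have hsep : ∀ t ∈ α.image offset, t + 1 ∉ α.image offset := by
    intro t ht ht1
    obtain ⟨a, ha, rfl⟩ := mem_image.mp ht
    obtain ⟨b, hb, hab⟩ := mem_image.mp ht1
    have : offset b < 2 * n + 2 := ZMod.val_lt _
    rw [ZMod.val_sub_eq_iff (by omega)] at hab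
    have hba : b = a + 1 := by rw [hab, Nat.cast_add_one, ZMod.natCast_zmod_val]; ring
    exact hα.2 a ⟨ha, hba ▸ hb⟩
  obtain ⟨s, hs, hO⟩ :=
    eq_stdWindow_of_card_eq hsub hsep (by rw [card_image_of_injective _ hf, hα.1])
  exact ⟨s, hs, ext fun x => by rw [mem_stdSet, ← hO, hf.mem_finset_image]⟩

lemma parity_add_one (p : ZMod (2 * n + 2)) : parity n (p + 1) = parity n p + 1 := by
  simp only [parity, map_add, map_one]

lemma parity_add_natCast_two_mul_add_one (p : ZMod (2 * n + 2)) (s : ℕ) :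
    parity n (p + (2 * s + 1 : ℕ)) = parity n p + 1 := by
  simp only [parity, map_add, map_natCast]
  push_cast
  rw [show (2 : ZMod 2) = 0 from rfl]
  ring

lemma card_filter_parity_eq_zero :
    #(univ.filter fun p : ZMod (2 * n + 2) => parity n p = 0) = n + 1 := by
  have hodd : #(univ.filter fun p : ZMod (2 * n + 2) => ¬ parity n p = 0) =
      #(univ.filter fun p : ZMod (2 * n + 2) => parity n p = 0) :=
    card_equiv (Equiv.addRight 1) fun p => by
      simp only [mem_filter, mem_univ, true_and, Equiv.coe_addRight, parity_add_one]
      generalize parity n p = z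
      revert z; decide
  have := card_filter_add_card_filter_not (s := univ) fun p : ZMod (2 * n + 2) => parity n p = 0
  rw [card_univ, ZMod.card] at this
  omega

lemma exists_isGap_parity_eq_zero {α : Finset (ZMod (2 * n + 2))} (hα : IsStable n α) :
    ∃ p, parity n p = 0 ∧ IsGap α p := by
  obtain ⟨m, hm⟩ := exists_isGap α (by rw [ZMod.card, hα.1]; omega)
  obtain ⟨s, hs, rfl⟩ := exists_eq_stdSet_of_isGap hα hm
  by_cases hpar : parity n m = 0
  · exact ⟨m, hpar, hm⟩
  · refine ⟨m + (2 * s + 1 : ℕ), ?_, (isGap_stdSet_iff hs).mpr (Or.inr rfl)⟩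
    rw [parity_add_natCast_two_mul_add_one]
    generalize parity n m = z at hpar
    revert z; decide

lemma isStable_iff_exists_stdSet {α : Finset (ZMod (2 * n + 2))} :
    IsStable n α ↔ ∃ p s, parity n p = 0 ∧ s ≤ n ∧ α = stdSet n p s := by
  refine ⟨fun hα => ?_, ?_⟩
  · obtain ⟨p, hp, hgap⟩ := exists_isGap_parity_eq_zero hα
    obtain ⟨s, hs, rfl⟩ := exists_eq_stdSet_of_isGap hα hgap
    exact ⟨p, s, hp, hs, rfl⟩
  · rintro ⟨p, s, -, -, rfl⟩
    exact isStable_stdSet p s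

lemma stdSet_injOn : Set.InjOn (fun z : ZMod (2 * n + 2) × ℕ => stdSet n z.1 z.2)
    {z | parity n z.1 = 0 ∧ z.2 ≤ n} := by
  rintro ⟨p, s⟩ ⟨hp, hs⟩ ⟨q, r⟩ ⟨hq, hr⟩ (h : stdSet n p s = stdSet n q r)
  obtain rfl : p = q := by
    refine ((isGap_stdSet_iff hr).mp (h ▸ (isGap_stdSet_iff hs).mpr (Or.inl rfl))).resolve_right
      fun hpq => ?_
    have := congrArg (parity n) hpq
    rw [parity_add_natCast_two_mul_add_one, hp, hq] at this
    exact absurd this (by decide)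
  have hv : (p + (2 * s + 1 : ℕ) - p).val = 2 * s + 1 := (ZMod.val_sub_eq_iff (by omega)).mpr rfl
  rcases (isGap_stdSet_iff hr).mp (h ▸ (isGap_stdSet_iff hs).mpr (Or.inr rfl)) with h0 | h1
  · rw [h0, sub_self, ZMod.val_zero] at hv
    omega
  · rw [(ZMod.val_sub_eq_iff (by omega)).mpr h1] at hv
    exact Prod.ext rfl (by simp only; omega)

end

theorem card_stable_sets_general (n : ℕ) :
    {α : Finset (ZMod (2 * n + 2)) | IsStable n α}.ncard = (n + 1) ^ 2 := by
  have hset : {α | IsStable n α} = ↑(((univ.filter fun p => parity n p = 0) ×ˢ range (n + 1)).image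
      fun z => stdSet n z.1 z.2) := by
    ext α
    simp [isStable_iff_exists_stdSet, eq_comm]
  rw [hset, Set.ncard_coe_finset, card_image_of_injOn, card_product, card_filter_parity_eq_zero,
    card_range, sq]
  exact stdSet_injOn.mono fun z hz => by simpa [Nat.lt_succ_iff] using hz

/-- The stable Kneser graph `SG_{n,2}` has exactly `(n+1)²` vertices. -/
theorem card_stable_sets (n : ℕ) (hn : 1 ≤ n) :
    {α : Finset (ZMod (2 * n + 2)) | IsStable n α}.ncard = (n + 1) ^ 2 :=
  card_stable_sets_general n
end

section
/- Let n ≥ 2 and 0 ≤ i ≤ n − 1. Let α ∈ P_i and β, γ ∈ P_{i+1} be such that |α ∩ β| = |(α ⊖ 2) ∩ β| = n − 1 and |(α ⊖ 2) ∩ γ| = |(α ⊖ 4) ∩ γ| = n − 1. Then γ = β ⊖ 2. -/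
/-!
Split a set into its even part `E` and odd part `O`; the shift by 2 preserves parity and has
order `n + 1`, so no nonempty set of size at most `n` is invariant under it. If `β ∈ P_{i+1}`
shares `n - 1` elements with `α ∈ P_i`, counting parities shows that `β` contains the even part
of `α` and that the odd part of `β` lies in that of `α`. Doing this for both `α` and `α ⊖ 2`
forces `O(β) = O(α) ∩ (O(α) ⊖ 2)` and, when `i > 0`, `E(β) = E(α) ∪ (E(α) ⊖ 2)`, so `β` is
determined by `α`. When `i = 0`, `β` has one even element `b`; by stability its neighbours
`b ± 1` are the only two odd elements missing from `β`, which pins `b` down because `4 ≠ 0`.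
Applying this uniqueness to `α ⊖ 2`, with `β ⊖ 2` and `γ` as the two candidates, gives the theorem.
-/

open Finset

theorem addOrderOf_le_card_of_add_mem {G : Type*} [AddGroup G] {S : Finset G} {g : G}
    (hS : ∀ x ∈ S, x + g ∈ S) (hne : S.Nonempty) : addOrderOf g ≤ #S := by
  obtain ⟨x, hx⟩ := hne
  have hmem : ∀ k : ℕ, x + k • g ∈ S := by
    intro k
    induction k with
    | zero => simpa using hx
    | succ k ih => simpa [succ_nsmul, ← add_assoc] using hS _ ih
  calc addOrderOf g = #(range (addOrderOf g)) := (card_range _).symm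
    _ ≤ #S := card_le_card_of_injOn (fun k => x + k • g) (fun k _ => hmem k)
        (fun k hk l hl h => nsmul_injOn_Iio_addOrderOf (by simpa using hk) (by simpa using hl)
          (add_left_cancel h))

theorem Finset.filter_subset_filter_and_filter_not_subset_filter_not {α : Type*} [DecidableEq α]
    {s t : Finset α} (p : α → Prop) [DecidablePred p]
    (hp : #(s.filter p) + 1 = #(t.filter p)) (hst : #(s ∩ t) + 1 = #t) :
    s.filter p ⊆ t.filter p ∧ t.filter (¬p ·) ⊆ s.filter (¬p ·) := by
  have hsplit := card_filter_add_card_filter_not (s := s ∩ t) p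
  have ht := card_filter_add_card_filter_not (s := t) p
  have hle₁ : #((s ∩ t).filter p) ≤ #(s.filter p) :=
    card_le_card (filter_subset_filter p inter_subset_left)
  have hle₂ : #((s ∩ t).filter (¬p ·)) ≤ #(t.filter (¬p ·)) :=
    card_le_card (filter_subset_filter _ inter_subset_right)
  have heq₁ : (s ∩ t).filter p = s.filter p :=
    eq_of_subset_of_card_le (filter_subset_filter p inter_subset_left) (by omega)
  have heq₂ : (s ∩ t).filter (¬p ·) = t.filter (¬p ·) :=
    eq_of_subset_of_card_le (filter_subset_filter _ inter_subset_right) (by omega)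
  constructor
  · rw [← heq₁]
    exact filter_subset_filter p inter_subset_right
  · rw [← heq₂]
    exact filter_subset_filter _ inter_subset_left

theorem eq_of_pair_sub_one_add_one_eq {R : Type*} [CommRing R] [DecidableEq R] {b c : R}
    (h : ({b - 1, b + 1} : Finset R) = {c - 1, c + 1}) (h4 : (4 : R) ≠ 0) : b = c := by
  have hb₁ : b + 1 ∈ ({c - 1, c + 1} : Finset R) := h ▸ by simp
  have hb₂ : b - 1 ∈ ({c - 1, c + 1} : Finset R) := h ▸ by simp
  simp only [mem_insert, mem_singleton] at hb₁ hb₂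
  rcases hb₁ with hb₁ | hb₁
  · rcases hb₂ with hb₂ | hb₂
    · linear_combination hb₂
    · exact absurd (by linear_combination hb₁ - hb₂) h4
  · linear_combination hb₁

theorem ZMod.natCast_ne_zero_of_lt {m k : ℕ} (hk : 0 < k) (hkm : k < m) : (k : ZMod m) ≠ 0 := by
  rw [Ne, ZMod.natCast_eq_zero_iff]
  exact Nat.not_dvd_of_pos_of_lt hk hkm

section ZModTwoMulAddTwo

variable {n i : ℕ}

theorem ZMod.addOrderOf_two_of_two_mul_add_two : addOrderOf (2 : ZMod (2 * n + 2)) = n + 1 := by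
  have h := ZMod.addOrderOf_coe 2 (n := 2 * n + 2) (by omega)
  rw [Nat.cast_ofNat, Nat.gcd_eq_right ⟨n + 1, by ring⟩] at h
  omega

theorem parity_two : parity n 2 = 0 := by
  rw [parity, map_ofNat]
  rfl

theorem parity_add_two (x : ZMod (2 * n + 2)) : parity n (x + 2) = parity n x := by
  rw [parity, map_add, ← parity, ← parity, parity_two, add_zero]

theorem parity_eq_one_iff (x : ZMod (2 * n + 2)) : parity n x = 1 ↔ ¬parity n x = 0 := by
  generalize parity n x = v
  revert v
  decide

def evens (n : ℕ) (α : Finset (ZMod (2 * n + 2))) : Finset (ZMod (2 * n + 2)) :=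
  α.filter (parity n · = 0)

def odds (n : ℕ) (α : Finset (ZMod (2 * n + 2))) : Finset (ZMod (2 * n + 2)) :=
  α.filter (parity n · = 1)

theorem odds_eq_filter_not (α : Finset (ZMod (2 * n + 2))) :
    odds n α = α.filter (¬parity n · = 0) :=
  filter_congr fun x _ => parity_eq_one_iff x

theorem evens_union_odds (α : Finset (ZMod (2 * n + 2))) : evens n α ∪ odds n α = α := by
  rw [odds_eq_filter_not]
  exact filter_union_filter_not_eq _ α

theorem card_odds_univ : #(odds n univ) = n + 1 := by
  have hsum : #(evens n univ) + #(odds n univ) = 2 * n + 2 := by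
    rw [odds_eq_filter_not, evens, card_filter_add_card_filter_not, card_univ, ZMod.card]
  have hclosed : ∀ v, ∀ x ∈ univ.filter (parity n · = v), x + 2 ∈ univ.filter (parity n · = v) :=
    fun v x hx => by simpa [parity_add_two] using hx
  have hevens : n + 1 ≤ #(evens n univ) := by
    rw [← ZMod.addOrderOf_two_of_two_mul_add_two]
    exact addOrderOf_le_card_of_add_mem (hclosed 0) ⟨0, mem_filter.2 ⟨mem_univ _, map_zero _⟩⟩
  have hodds : n + 1 ≤ #(odds n univ) := by
    rw [← ZMod.addOrderOf_two_of_two_mul_add_two]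
    exact addOrderOf_le_card_of_add_mem (hclosed 1) ⟨1, mem_filter.2 ⟨mem_univ _, map_one _⟩⟩
  omega

theorem mem_ominus {α : Finset (ZMod (2 * n + 2))} {j x : ZMod (2 * n + 2)} :
    x ∈ ominus n α j ↔ x + j ∈ α := by
  simp [ominus, sub_eq_iff_eq_add]

theorem card_ominus (α : Finset (ZMod (2 * n + 2))) (j : ZMod (2 * n + 2)) :
    #(ominus n α j) = #α :=
  card_image_of_injective _ sub_left_injective

theorem ominus_inter (α β : Finset (ZMod (2 * n + 2))) (j : ZMod (2 * n + 2)) :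
    ominus n (α ∩ β) j = ominus n α j ∩ ominus n β j :=
  image_inter _ _ sub_left_injective

theorem ominus_ominus (α : Finset (ZMod (2 * n + 2))) (j k : ZMod (2 * n + 2)) :
    ominus n (ominus n α j) k = ominus n α (j + k) := by
  ext x
  simp only [mem_ominus, add_assoc, add_comm k j]

theorem evens_ominus_two (α : Finset (ZMod (2 * n + 2))) :
    evens n (ominus n α 2) = ominus n (evens n α) 2 := by
  ext x
  simp [evens, mem_ominus, parity_add_two]

theorem odds_ominus_two (α : Finset (ZMod (2 * n + 2))) :
    odds n (ominus n α 2) = ominus n (odds n α) 2 := by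
  ext x
  simp [odds, mem_ominus, parity_add_two]

theorem ominus_two_mem_Pset {α : Finset (ZMod (2 * n + 2))} (hα : α ∈ Pset n i) :
    ominus n α 2 ∈ Pset n i := by
  obtain ⟨⟨hcard, hstab⟩, hevens, hodds⟩ := hα
  refine ⟨⟨by rwa [card_ominus], fun x ⟨hx, hx₁⟩ => hstab (x + 2) ⟨mem_ominus.1 hx, ?_⟩⟩, ?_, ?_⟩
  · simpa [mem_ominus, add_right_comm] using hx₁
  · exact (congrArg card (evens_ominus_two α)).trans ((card_ominus _ _).trans hevens)
  · exact (congrArg card (odds_ominus_two α)).trans ((card_ominus _ _).trans hodds)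

theorem eq_empty_of_subset_ominus_two {S : Finset (ZMod (2 * n + 2))} (h : S ⊆ ominus n S 2)
    (hS : #S ≤ n) : S = ∅ := by
  by_contra hne
  have := addOrderOf_le_card_of_add_mem (fun x hx => mem_ominus.1 (h hx))
    (nonempty_iff_ne_empty.2 hne)
  rw [ZMod.addOrderOf_two_of_two_mul_add_two] at this
  omega

theorem eq_empty_of_ominus_two_subset {S : Finset (ZMod (2 * n + 2))} (h : ominus n S 2 ⊆ S)
    (hS : #S ≤ n) : S = ∅ :=
  eq_empty_of_subset_ominus_two
    (eq_of_subset_of_card_le h (card_ominus S 2).ge).ge hS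

theorem lt_of_mem_Pset_succ {β : Finset (ZMod (2 * n + 2))} (hβ : β ∈ Pset n (i + 1)) : i < n := by
  obtain ⟨⟨hcard, -⟩, hevens, -⟩ := hβ
  have := card_filter_le β (parity n · = 0)
  omega

variable {α β γ : Finset (ZMod (2 * n + 2))}

theorem evens_subset_and_odds_subset (hα : α ∈ Pset n i) (hβ : β ∈ Pset n (i + 1))
    (h : #(α ∩ β) = n - 1) : evens n α ⊆ evens n β ∧ odds n β ⊆ odds n α := by
  have hi := lt_of_mem_Pset_succ hβ
  obtain ⟨-, hαe, -⟩ := hα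
  obtain ⟨⟨hβcard, -⟩, hβe, -⟩ := hβ
  rw [odds_eq_filter_not, odds_eq_filter_not]
  exact filter_subset_filter_and_filter_not_subset_filter_not _ (by rw [hαe, hβe]) (by omega)

theorem odds_eq_inter_ominus_two (hα : α ∈ Pset n i) (hβ : β ∈ Pset n (i + 1))
    (h₁ : #(α ∩ β) = n - 1) (h₂ : #(ominus n α 2 ∩ β) = n - 1) :
    odds n β = odds n α ∩ ominus n (odds n α) 2 := by
  have hi := lt_of_mem_Pset_succ hβ
  have hsub₁ := (evens_subset_and_odds_subset hα hβ h₁).2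
  have hsub₂ := (evens_subset_and_odds_subset (ominus_two_mem_Pset hα) hβ h₂).2
  rw [odds_ominus_two] at hsub₂
  have hodds_α : #(odds n α) = n - i := hα.2.2
  have hodds_β : #(odds n β) = n - (i + 1) := hβ.2.2
  have hproper : odds n α ∩ ominus n (odds n α) 2 ⊂ odds n α := by
    refine Finset.ssubset_iff_subset_ne.2 ⟨inter_subset_left, fun heq => ?_⟩
    have hempty := eq_empty_of_subset_ominus_two (inter_eq_left.1 heq) (by omega)
    rw [hempty, card_empty] at hodds_α
    omega
  refine eq_of_subset_of_card_le (subset_inter hsub₁ hsub₂) ?_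
  have := card_lt_card hproper
  omega

theorem evens_eq_union_ominus_two (hi : 0 < i) (hα : α ∈ Pset n i) (hβ : β ∈ Pset n (i + 1))
    (h₁ : #(α ∩ β) = n - 1) (h₂ : #(ominus n α 2 ∩ β) = n - 1) :
    evens n β = evens n α ∪ ominus n (evens n α) 2 := by
  have hin := lt_of_mem_Pset_succ hβ
  have hsub₁ := (evens_subset_and_odds_subset hα hβ h₁).1
  have hsub₂ := (evens_subset_and_odds_subset (ominus_two_mem_Pset hα) hβ h₂).1
  rw [evens_ominus_two] at hsub₂
  have hevens_α : #(evens n α) = i := hα.2.1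
  have hevens_β : #(evens n β) = i + 1 := hβ.2.1
  have hproper : evens n α ⊂ evens n α ∪ ominus n (evens n α) 2 := by
    refine Finset.ssubset_iff_subset_ne.2 ⟨subset_union_left, fun heq => ?_⟩
    have hempty := eq_empty_of_ominus_two_subset (union_eq_left.1 heq.symm) (by omega)
    rw [hempty, card_empty] at hevens_α
    omega
  refine (eq_of_subset_of_card_le (union_subset hsub₁ hsub₂) ?_).symm
  have := card_lt_card hproper
  omega

theorem odds_univ_sdiff_odds_eq_pair (hβ : β ∈ Pset n 1) {b : ZMod (2 * n + 2)} (hb : b ∈ β)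
    (hpb : parity n b = 0) : odds n univ \ odds n β = {b - 1, b + 1} := by
  have hn : 0 < n := lt_of_mem_Pset_succ (i := 0) hβ
  obtain ⟨⟨-, hstab⟩, -, hodds⟩ := hβ
  have hodds_β : #(odds n β) = n - 1 := hodds
  have hodds_mono : odds n β ⊆ odds n univ := filter_subset_filter _ (subset_univ β)
  have htwo : (2 : ZMod (2 * n + 2)) ≠ 0 := by
    exact_mod_cast ZMod.natCast_ne_zero_of_lt (k := 2) (by norm_num) (by omega)
  have hne : b - 1 ≠ b + 1 := fun h => htwo (by linear_combination -h)
  have hsub : {b - 1, b + 1} ⊆ odds n univ \ odds n β := by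
    intro x hx
    simp only [mem_insert, mem_singleton] at hx
    simp only [odds, mem_sdiff, mem_filter, mem_univ, true_and]
    rcases hx with rfl | rfl
    · refine ⟨by rw [parity, map_sub, ← parity, hpb, map_one]; decide,
        fun h => hstab (b - 1) ⟨h.1, by simpa using hb⟩⟩
    · exact ⟨by rw [parity, map_add, ← parity, hpb, map_one, zero_add], fun h => hstab b ⟨hb, h.1⟩⟩
  refine (eq_of_subset_of_card_le hsub ?_).symm
  rw [card_pair hne, card_sdiff_of_subset hodds_mono, card_odds_univ, hodds_β]
  omega

theorem eq_of_odds_eq_of_mem_Pset_one (hn : 2 ≤ n) (hβ : β ∈ Pset n 1) (hγ : γ ∈ Pset n 1)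
    (h : odds n β = odds n γ) : β = γ := by
  obtain ⟨b, hb⟩ : ∃ b, evens n β = {b} := card_eq_one.1 hβ.2.1
  obtain ⟨c, hc⟩ : ∃ c, evens n γ = {c} := card_eq_one.1 hγ.2.1
  have hb' := mem_filter.1 (hb ▸ mem_singleton_self b : b ∈ evens n β)
  have hc' := mem_filter.1 (hc ▸ mem_singleton_self c : c ∈ evens n γ)
  have hbc : b = c := by
    have hfour : (4 : ZMod (2 * n + 2)) ≠ 0 := by
      exact_mod_cast ZMod.natCast_ne_zero_of_lt (k := 4) (by norm_num) (by omega)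
    refine eq_of_pair_sub_one_add_one_eq ?_ hfour
    rw [← odds_univ_sdiff_odds_eq_pair hβ hb'.1 hb'.2,
      ← odds_univ_sdiff_odds_eq_pair hγ hc'.1 hc'.2, h]
  rw [← evens_union_odds β, ← evens_union_odds γ, hb, hc, hbc, h]

theorem eq_of_card_inter_eq_of_card_ominus_two_inter_eq (hn : 2 ≤ n)
    (hα : α ∈ Pset n i) (hβ : β ∈ Pset n (i + 1)) (hγ : γ ∈ Pset n (i + 1))
    (hαβ : #(α ∩ β) = n - 1) (hαβ₂ : #(ominus n α 2 ∩ β) = n - 1)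
    (hαγ : #(α ∩ γ) = n - 1) (hαγ₂ : #(ominus n α 2 ∩ γ) = n - 1) : β = γ := by
  have hodds : odds n β = odds n γ := by
    rw [odds_eq_inter_ominus_two hα hβ hαβ hαβ₂, odds_eq_inter_ominus_two hα hγ hαγ hαγ₂]
  rcases Nat.eq_zero_or_pos i with rfl | hi
  · exact eq_of_odds_eq_of_mem_Pset_one hn hβ hγ hodds
  · rw [← evens_union_odds β, ← evens_union_odds γ, hodds,
      evens_eq_union_ominus_two hi hα hβ hαβ hαβ₂, evens_eq_union_ominus_two hi hα hγ hαγ hαγ₂]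

end ZModTwoMulAddTwo

theorem neighbors_cycle_general (n i : ℕ) (hn : 2 ≤ n)
    (α β γ : Finset (ZMod (2 * n + 2)))
    (hα : α ∈ Pset n i) (hβ : β ∈ Pset n (i + 1)) (hγ : γ ∈ Pset n (i + 1))
    (h1 : (α ∩ β).card = n - 1)
    (h2 : ((ominus n α 2) ∩ β).card = n - 1)
    (h3 : ((ominus n α 2) ∩ γ).card = n - 1)
    (h4 : ((ominus n α 4) ∩ γ).card = n - 1) :
    γ = ominus n β 2 := by
  refine eq_of_card_inter_eq_of_card_ominus_two_inter_eq hn (ominus_two_mem_Pset hα) hγ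
    (ominus_two_mem_Pset hβ) h3 ?_ ?_ ?_
  · rwa [ominus_ominus, show (2 : ZMod (2 * n + 2)) + 2 = 4 by norm_num]
  · rwa [← ominus_inter, card_ominus]
  · rwa [← ominus_inter, card_ominus]

/-- If `α ∈ P_i`, and `β, γ ∈ P_{i+1}` satisfy
`|α ∩ β| = |(α ⊖ 2) ∩ β| = n - 1` and `|(α ⊖ 2) ∩ γ| = |(α ⊖ 4) ∩ γ| = n - 1`,
then `γ = β ⊖ 2`. -/
theorem neighbors_cycle (n i : ℕ) (hn : 2 ≤ n) (hi : i ≤ n - 1)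
    (α β γ : Finset (ZMod (2 * n + 2)))
    (hα : α ∈ Pset n i) (hβ : β ∈ Pset n (i + 1)) (hγ : γ ∈ Pset n (i + 1))
    (h1 : (α ∩ β).card = n - 1)
    (h2 : ((ominus n α 2) ∩ β).card = n - 1)
    (h3 : ((ominus n α 2) ∩ γ).card = n - 1)
    (h4 : ((ominus n α 4) ∩ γ).card = n - 1) :
    γ = ominus n β 2 :=
  neighbors_cycle_general n i hn α β γ hα hβ hγ h1 h2 h3 h4
end

section
/- Let n ≥ 1 and let α and β be distinct loose stable n-sets in ZMod (2n+2). Then α and β have at most two common neighbors in SG_{n,2}; that is, there are at most two stable n-sets disjoint from both α and β. -/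
/-!
The complement of a stable n-set `α` has `n + 2` points, `n` of which lie in `α ⊕ 1`. The other
two, `t₁` and `t₂`, are the right ends of the two gaps `{tᵢ - 1, tᵢ}` of length two, and these gaps
are disjoint when `α` is loose, since three consecutive points outside `α` force `α` to be tight.
A stable n-set `γ` disjoint from `α` is `αᶜ` with two points removed, and by stability it omits a
point of each gap. So, given `x ∉ α`, pick a gap not containing `x`: a neighbor `γ` of `α` with
`x ∉ γ` is `αᶜ` minus `x` and one of the two points of that gap, which leaves two choices.
If `α` and `β` had three common neighbors, every `x ∉ α` would lie in one of them, hence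
outside `β`; thus `β ⊆ α`, and `β = α` as both have `n` elements.
-/

theorem mem_oplus {n : ℕ} {α : Finset (ZMod (2 * n + 2))} {j z : ZMod (2 * n + 2)} :
    z ∈ oplus n α j ↔ z - j ∈ α := by
  simp [oplus, sub_eq_add_neg]

theorem natCast_ne_natCast_of_lt {m a b : ℕ} (ha : a < m) (hb : b < m) (hab : a ≠ b) :
    (a : ZMod m) ≠ b :=
  fun h => hab (CharP.natCast_injOn_Iio (ZMod m) m ha hb h)

namespace IsStable

variable {n : ℕ} {α : Finset (ZMod (2 * n + 2))}

theorem card_compl (hα : IsStable n α) : αᶜ.card = n + 2 := by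
  rw [Finset.card_compl, hα.1, ZMod.card]
  omega

theorem oplus_one_subset_compl (hα : IsStable n α) : oplus n α 1 ⊆ αᶜ := by
  intro z hz
  rw [mem_oplus] at hz
  rw [Finset.mem_compl]
  simpa using fun hz' => hα.2 (z - 1) ⟨hz, by simpa using hz'⟩

theorem mem_compl_sdiff_oplus_one {z : ZMod (2 * n + 2)} :
    z ∈ αᶜ \ oplus n α 1 ↔ z ∉ α ∧ z - 1 ∉ α := by
  rw [Finset.mem_sdiff, Finset.mem_compl, mem_oplus]

theorem card_compl_sdiff_oplus_one (hα : IsStable n α) : (αᶜ \ oplus n α 1).card = 2 := by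
  rw [Finset.card_sdiff_of_subset hα.oplus_one_subset_compl, hα.card_compl, oplus,
    Finset.card_image_of_injective _ (add_left_injective 1), hα.1]
  omega

theorem compl_sdiff_oplus_one_eq_pair (hα : IsStable n α) {t : ZMod (2 * n + 2)}
    (h0 : t ∉ α) (h1 : t + 1 ∉ α) (h2 : t + 2 ∉ α) : αᶜ \ oplus n α 1 = {t + 1, t + 2} := by
  refine (Finset.eq_of_subset_of_card_le ?_ ?_).symm
  · intro z hz
    rw [Finset.mem_insert, Finset.mem_singleton] at hz
    rw [mem_compl_sdiff_oplus_one]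
    rcases hz with rfl | rfl
    · exact ⟨h1, by simpa using h0⟩
    · exact ⟨h2, by convert h1 using 2; ring⟩
  · have h01 : (0 : ZMod (2 * n + 2)) ≠ 1 := by
      simpa using natCast_ne_natCast_of_lt (m := 2 * n + 2) (a := 0) (b := 1)
        (by omega) (by omega) (by omega)
    rw [hα.card_compl_sdiff_oplus_one, Finset.card_pair]
    intro h
    exact h01 (by linear_combination h)

theorem isTight_of_three_notMem (hα : IsStable n α) {t : ZMod (2 * n + 2)}
    (h0 : t ∉ α) (h1 : t + 1 ∉ α) (h2 : t + 2 ∉ α) : IsTight n α := by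
  have hT := hα.compl_sdiff_oplus_one_eq_pair h0 h1 h2
  have hstep : ∀ k < n, t + ((2 * k + 3 : ℕ) : ZMod (2 * n + 2)) - 1 ∉ α →
      t + ((2 * k + 3 : ℕ) : ZMod (2 * n + 2)) ∈ α := by
    intro k hk hpred
    by_contra hz
    have hmem := mem_compl_sdiff_oplus_one.2 ⟨hz, hpred⟩
    rw [hT, Finset.mem_insert, Finset.mem_singleton, add_right_inj, add_right_inj] at hmem
    rcases hmem with h | h
    · exact natCast_ne_natCast_of_lt (m := 2 * n + 2) (a := 2 * k + 3) (b := 1)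
        (by omega) (by omega) (by omega) (by exact_mod_cast h)
    · exact natCast_ne_natCast_of_lt (m := 2 * n + 2) (a := 2 * k + 3) (b := 2)
        (by omega) (by omega) (by omega) (by exact_mod_cast h)
  have hchain : ∀ k < n, t + ((2 * k + 3 : ℕ) : ZMod (2 * n + 2)) ∈ α := by
    intro k
    induction k with
    | zero => exact fun hk => hstep 0 hk (by convert h2 using 2; push_cast; ring)
    | succ k ih =>
      refine fun hk => hstep (k + 1) hk fun h => hα.2 _ ⟨ih (by omega), ?_⟩
      convert h using 2; push_cast; ring
  refine ⟨t + 3, (Finset.eq_of_subset_of_card_le ?_ ?_).symm⟩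
  · intro z hz
    obtain ⟨k, hk, rfl⟩ := Finset.mem_image.1 hz
    convert hchain k (Finset.mem_range.1 hk) using 1; push_cast; ring
  · rw [hα.1, Finset.card_image_of_injOn, Finset.card_range]
    intro a ha b hb hab
    have ha' := Finset.mem_range.1 ha
    have hb' := Finset.mem_range.1 hb
    by_contra hne
    refine natCast_ne_natCast_of_lt (m := 2 * n + 2) (a := 2 * a) (b := 2 * b)
      (by omega) (by omega) (by omega) ?_
    simpa using hab

theorem add_one_notMem_compl_sdiff_oplus_one (hα : IsStable n α) (hαl : ¬ IsTight n α)
    {t : ZMod (2 * n + 2)} (ht : t ∈ αᶜ \ oplus n α 1) : t + 1 ∉ αᶜ \ oplus n α 1 := by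
  rw [mem_compl_sdiff_oplus_one] at ht ⊢
  rintro ⟨h, -⟩
  exact hαl (hα.isTight_of_three_notMem ht.2 (by simpa using ht.1) (by convert h using 2; ring))

theorem exists_mem_compl_sdiff_oplus_one_ne (hα : IsStable n α) (hαl : ¬ IsTight n α)
    (x : ZMod (2 * n + 2)) : ∃ t ∈ αᶜ \ oplus n α 1, x ≠ t - 1 ∧ x ≠ t := by
  obtain ⟨t₁, t₂, hne, hT⟩ := Finset.card_eq_two.1 hα.card_compl_sdiff_oplus_one
  have h₁ : t₁ ∈ αᶜ \ oplus n α 1 := by simp [hT]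
  have h₂ : t₂ ∈ αᶜ \ oplus n α 1 := by simp [hT]
  by_contra! h
  have h' : ∀ t ∈ αᶜ \ oplus n α 1, x = t - 1 ∨ x = t := fun t ht =>
    or_iff_not_imp_left.2 (h t ht)
  rcases h' t₁ h₁ with e₁ | e₁ <;> rcases h' t₂ h₂ with e₂ | e₂
  · exact hne (by linear_combination e₂ - e₁)
  · exact hα.add_one_notMem_compl_sdiff_oplus_one hαl h₂
      (by rwa [show t₂ + 1 = t₁ by linear_combination e₁ - e₂])
  · exact hα.add_one_notMem_compl_sdiff_oplus_one hαl h₁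
      (by rwa [show t₁ + 1 = t₂ by linear_combination e₂ - e₁])
  · exact hne (e₁.symm.trans e₂)

theorem setOf_disjoint_notMem_subset (hα : IsStable n α) {t x : ZMod (2 * n + 2)}
    (ht : t ∈ αᶜ \ oplus n α 1) (hx : x ∉ α) (hxt : x ≠ t - 1 ∧ x ≠ t) :
    {γ | IsStable n γ ∧ Disjoint α γ ∧ x ∉ γ} ⊆ {αᶜ \ {x, t - 1}, αᶜ \ {x, t}} := by
  rintro γ ⟨hγ, hαγ, hxγ⟩
  have hγα : γ ⊆ αᶜ := Finset.subset_compl_iff_disjoint_right.2 hαγ.symm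
  rw [mem_compl_sdiff_oplus_one] at ht
  obtain ⟨u, hu, huγ⟩ : ∃ u ∈ ({t - 1, t} : Finset _), u ∈ αᶜ \ γ := by
    by_cases h : t - 1 ∈ γ
    · refine ⟨t, by simp, Finset.mem_sdiff.2 ⟨Finset.mem_compl.2 ht.1, fun h' => ?_⟩⟩
      exact hγ.2 (t - 1) ⟨h, by simpa using h'⟩
    · exact ⟨t - 1, by simp, Finset.mem_sdiff.2 ⟨Finset.mem_compl.2 ht.2, h⟩⟩
  rw [Finset.mem_insert, Finset.mem_singleton] at hu
  have hxu : x ≠ u := by rcases hu with rfl | rfl <;> tauto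
  have hD : αᶜ \ γ = {x, u} := by
    refine (Finset.eq_of_subset_of_card_le ?_ ?_).symm
    · exact Finset.insert_subset_iff.2
        ⟨Finset.mem_sdiff.2 ⟨Finset.mem_compl.2 hx, hxγ⟩, Finset.singleton_subset_iff.2 huγ⟩
    · rw [Finset.card_sdiff_of_subset hγα, hα.card_compl, hγ.1, Finset.card_pair hxu]
      omega
  have hγD : γ = αᶜ \ {x, u} := by rw [← hD, Finset.sdiff_sdiff_eq_self hγα]
  rcases hu with rfl | rfl <;> simp [hγD]

theorem ncard_setOf_disjoint_notMem_le_two (hα : IsStable n α) (hαl : ¬ IsTight n α)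
    {x : ZMod (2 * n + 2)} (hx : x ∉ α) :
    {γ | IsStable n γ ∧ Disjoint α γ ∧ x ∉ γ}.ncard ≤ 2 := by
  obtain ⟨t, ht, hxt⟩ := hα.exists_mem_compl_sdiff_oplus_one_ne hαl x
  calc _ ≤ ({αᶜ \ {x, t - 1}, αᶜ \ {x, t}} : Set _).ncard :=
        Set.ncard_le_ncard (hα.setOf_disjoint_notMem_subset ht hx hxt)
    _ ≤ 2 := (Set.ncard_insert_le _ _).trans (by rw [Set.ncard_singleton])

end IsStable

theorem loose_loose_common_neighbors_general (n : ℕ)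
    (α β : Finset (ZMod (2 * n + 2)))
    (hα : IsStable n α) (hαl : ¬ IsTight n α)
    (hβ : IsStable n β) (hne : α ≠ β) :
    {γ : Finset (ZMod (2 * n + 2)) |
      IsStable n γ ∧ Disjoint α γ ∧ Disjoint β γ}.ncard ≤ 2 := by
  by_contra! hlt
  have hβα : β ⊆ α := by
    intro b hb
    by_contra hbα
    obtain ⟨γ, ⟨hγ, hαγ, hβγ⟩, hbγ⟩ := Set.exists_mem_notMem_of_ncard_lt_ncard
      ((hα.ncard_setOf_disjoint_notMem_le_two hαl hbα).trans_lt hlt)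
    have hbγ' : b ∈ γ := by
      by_contra h
      exact hbγ ⟨hγ, hαγ, h⟩
    exact Finset.disjoint_left.1 hβγ hb hbγ'
  exact hne (Finset.eq_of_subset_of_card_le hβα (by rw [hα.1, hβ.1])).symm

/-- Two distinct loose stable n-sets have at most two common neighbors in
`SG_{n,2}`. -/
theorem loose_loose_common_neighbors (n : ℕ) (hn : 1 ≤ n)
    (α β : Finset (ZMod (2 * n + 2)))
    (hα : IsStable n α) (hαl : ¬ IsTight n α)
    (hβ : IsStable n β) (hβl : ¬ IsTight n β) (hne : α ≠ β) :
    {γ : Finset (ZMod (2 * n + 2)) |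
      IsStable n γ ∧ Disjoint α γ ∧ Disjoint β γ}.ncard ≤ 2 :=
  loose_loose_common_neighbors_general n α β hα hαl hβ hne
end
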